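/- Let A be a Hopf algebra and B a left coideal subalgebra. For any right ideal R of B⁺, the right ideal R_{δ_R} associated to the derivation δ_R satisfies R_{δ_R} ⊆ R; and for any equivariant derivation δ of B, δ_{R_δ} ≤ δ. Consequently the maps R ↦ δ_R and δ ↦ R_δ restrict to mutually inverse, order-reversing bijections between {R_δ : δ equivariant derivation of B} and {δ_R : R right ideal of B⁺}. -/

import Mathlib

/-!
Let `W(a ⊗ b) = a₍₁₎b₍₁₎ ⊗ a₍₂₎ ⊗ b₍₂₎` be the diagonal coaction of `A` on `B ⊗ B`, and
`e(a ⊗ b) = ε(a) b⁺`. Counitality gives `Φ = (id ⊗ e) ∘ W` and `(ε ⊗ id) ∘ Φ = e`; the second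
identity is `R_{δ_R} ⊆ R`. If `K ⊆ B ⊗ B` satisfies `W(K) ⊆ A ⊗ K`, the first identity gives
`Φ(K) ⊆ A ⊗ e(K)`. For an equivariant `δ`, the kernel `K` of `a ⊗ b ↦ a δb` is such a subspace,
because `(id ⊗ δ) ∘ W` vanishes on `K` and `A ⊗ -` is exact; since `e(K) = R_δ` this is
`δ_{R_δ} ≤ δ`. The kernel `Φ⁻¹(A ⊗ R)` of `δ_R` is such a subspace too, because coassociativity
gives `(id ⊗ Φ) ∘ W = (Δ ⊗ id) ∘ Φ`, and this yields `δ_{R_{δ_R}} = δ_R`.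
-/

open TensorProduct

noncomputable section

/-- A derivation of an algebra `B` into a `B`-bimodule `M`. -/
structure BimodDeriv (B M : Type) [Ring B] [Algebra ℂ B]
    [AddCommGroup M] [Module ℂ M] where
  l : B →ₗ[ℂ] M →ₗ[ℂ] M
  r : B →ₗ[ℂ] M →ₗ[ℂ] M
  l_mul : ∀ a b m, l (a * b) m = l a (l b m)
  l_one : ∀ m, l 1 m = m
  r_mul : ∀ a b m, r (a * b) m = r b (r a m)
  r_one : ∀ m, r 1 m = m
  lr_comm : ∀ a b m, l a (r b m) = r b (l a m)
  d : B →ₗ[ℂ] M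
  leibniz : ∀ a b, d (a * b) = l a (d b) + r b (d a)

variable (A : Type) [Ring A] [HopfAlgebra ℂ A] (B : Subalgebra ℂ A)

/-- The counit of `A` restricted to `B`. -/
def epsB : ↥B →ₐ[ℂ] ℂ := (Bialgebra.counitAlgHom ℂ A).comp B.val

/-- `B⁺ = B ∩ ker ε`. -/
def Bplus : Submodule ℂ ↥B := LinearMap.ker (epsB A B).toLinearMap

/-- `b ↦ b⁺ = b − ε(b)1` on `B`. -/
def plusB : ↥B →ₗ[ℂ] ↥B :=
  LinearMap.id - (Algebra.linearMap ℂ ↥B).comp (epsB A B).toLinearMap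

/-- `a ↦ a⁺ = a − ε(a)1` on `A`. -/
def plusA : A →ₗ[ℂ] A :=
  LinearMap.id - (Algebra.linearMap ℂ A).comp (Coalgebra.counit (R := ℂ))

/-- `A ⊗ N` as a submodule of `A ⊗ A`. -/
def AOx (N : Submodule ℂ A) : Submodule ℂ (A ⊗[ℂ] A) :=
  LinearMap.range (TensorProduct.map (LinearMap.id : A →ₗ[ℂ] A) N.subtype)

variable (comulB : ↥B →ₗ[ℂ] A ⊗[ℂ] ↥B)

/-- `Φ a b = Σ a·b₍₁₎ ⊗ b₍₂₎⁺ ∈ A ⊗ A`; `Σᵢ aᵢ δ_R bᵢ = 0` iff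
`Σᵢ Φ aᵢ bᵢ ∈ A ⊗ R`. -/
def PhiE (a b : ↥B) : A ⊗[ℂ] A :=
  (TensorProduct.map (LinearMap.mulLeft ℂ (a : A))
    ((plusA A) ∘ₗ B.val.toLinearMap)) (comulB b)

/-- The Sweedler-type map `a ⊗ b ↦ a₍₁₎b₍₁₎ ⊗ a₍₂₎·δ(b₍₂₎)`. -/
def sweedlerMap {M : Type} [AddCommGroup M] [Module ℂ M]
    (δ : BimodDeriv ↥B M) : ↥B ⊗[ℂ] ↥B →ₗ[ℂ] A ⊗[ℂ] M :=
  (TensorProduct.map (LinearMap.mul' ℂ A)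
      (TensorProduct.lift
        (LinearMap.mk₂ ℂ (fun a b => δ.l a (δ.d b))
          (fun a a' b => by simp)
          (fun c a b => by simp)
          (fun a b b' => by simp)
          (fun c a b => by simp)))) ∘ₗ
    (TensorProduct.tensorTensorTensorComm ℂ A ↥B A ↥B).toLinearMap ∘ₗ
    (TensorProduct.map comulB comulB)

/-- Equivariance of a derivation of the left coideal subalgebra `B`. -/
def IsEquivariant {M : Type} [AddCommGroup M] [Module ℂ M]
    (δ : BimodDeriv ↥B M) : Prop :=
  ∀ L : List (↥B × ↥B),
    (L.map fun p => δ.l p.1 (δ.d p.2)).sum = 0 →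
    (L.map fun p => sweedlerMap A B comulB δ (p.1 ⊗ₜ[ℂ] p.2)).sum = 0

/-- `R_δ` for an abstract derivation `δ`. -/
def RdeltaSet {M : Type} [AddCommGroup M] [Module ℂ M]
    (δ : BimodDeriv ↥B M) : Set ↥B :=
  {x | ∃ L : List (↥B × ↥B),
    (L.map fun p => δ.l p.1 (δ.d p.2)).sum = 0 ∧
    x = (L.map fun p => epsB A B p.1 • plusB A B p.2).sum}

/-- `R_{δ_R}` for the derivation `δ_R` associated to a right ideal `R ⊆ B⁺`. -/
def RdeltaRSet (R : Submodule ℂ ↥B) : Set ↥B :=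
  {x | ∃ L : List (↥B × ↥B),
    (L.map fun p => PhiE A B comulB p.1 p.2).sum ∈ AOx A (R.map B.val.toLinearMap) ∧
    x = (L.map fun p => epsB A B p.1 • plusB A B p.2).sum}

section ListTensor

variable {R X Y Z : Type*} [CommSemiring R] [AddCommMonoid X] [Module R X] [AddCommMonoid Y]
  [Module R Y] [AddCommMonoid Z] [Module R Z]

def sumTmul (L : List (X × Y)) : X ⊗[R] Y :=
  (L.map fun p => p.1 ⊗ₜ p.2).sum

lemma sum_map_eq_sumTmul {F : X ⊗[R] Y →ₗ[R] Z} {G : X → Y → Z}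
    (hF : ∀ x y, F (x ⊗ₜ y) = G x y) (L : List (X × Y)) :
    (L.map fun p => G p.1 p.2).sum = F (sumTmul L) := by
  simp only [sumTmul, map_list_sum, List.map_map, Function.comp_def, hF]

lemma exists_sumTmul_eq (t : X ⊗[R] Y) : ∃ L : List (X × Y), sumTmul L = t := by
  induction t with
  | zero => exact ⟨[], rfl⟩
  | tmul x y => exact ⟨[(x, y)], by simp [sumTmul]⟩
  | add s t hs ht =>
    obtain ⟨L₁, rfl⟩ := hs
    obtain ⟨L₂, rfl⟩ := ht
    exact ⟨L₁ ++ L₂, by simp [sumTmul]⟩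

end ListTensor

section CoactTensor

open LinearMap

variable (R S X Y : Type*) [CommSemiring R] [Semiring S] [Algebra R S]
  [AddCommMonoid X] [Module R X] [AddCommMonoid Y] [Module R Y]

def coactTensor : (S ⊗[R] X) ⊗[R] (S ⊗[R] Y) →ₗ[R] S ⊗[R] (X ⊗[R] Y) :=
  map (mul' R S) id ∘ₗ (tensorTensorTensorComm R S X S Y).toLinearMap

variable {R S X Y} {X' Y' : Type*} [AddCommMonoid X'] [Module R X'] [AddCommMonoid Y']
  [Module R Y']

@[simp] lemma coactTensor_tmul (x y : S) (a : X) (b : Y) :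
    coactTensor R S X Y ((x ⊗ₜ a) ⊗ₜ (y ⊗ₜ b)) = (x * y) ⊗ₜ (a ⊗ₜ b) := by
  simp [coactTensor]

lemma lTensor_map_comp_coactTensor (f : X →ₗ[R] X') (g : Y →ₗ[R] Y') :
    lTensor S (map f g) ∘ₗ coactTensor R S X Y
      = coactTensor R S X' Y' ∘ₗ map (lTensor S f) (lTensor S g) := by
  ext x a y b
  simp

end CoactTensor

lemma Bialgebra.counit_comp_mulLeft {R S : Type*} [CommSemiring R] [Semiring S]
    [Bialgebra R S] (x : S) :
    Coalgebra.counit ∘ₗ LinearMap.mulLeft R x = Coalgebra.counit (R := R) x • Coalgebra.counit := by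
  ext y
  simp [Bialgebra.counit_mul]

lemma Module.Flat.mem_range_lTensor_ker_subtype {R M X Y : Type*} [CommRing R]
    [AddCommGroup M] [Module R M] [Module.Flat R M] [AddCommGroup X] [Module R X]
    [AddCommGroup Y] [Module R Y] {g : X →ₗ[R] Y} {y : M ⊗[R] X}
    (hy : LinearMap.lTensor M g y = 0) :
    y ∈ LinearMap.range (LinearMap.lTensor M (LinearMap.ker g).subtype) := by
  rwa [← (Module.Flat.lTensor_exact M (LinearMap.exact_subtype_ker_map g)).linearMap_ker_eq]

def BimodDeriv.smulD {R M : Type} [Ring R] [Algebra ℂ R] [AddCommGroup M] [Module ℂ M]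
    (δ : BimodDeriv R M) : R ⊗[ℂ] R →ₗ[ℂ] M :=
  TensorProduct.lift (δ.l.compl₂ δ.d)

section HopfLevel

open LinearMap

def phiA : A ⊗[ℂ] A →ₗ[ℂ] A ⊗[ℂ] A :=
  lift ((rTensorHom A ∘ₗ LinearMap.mul ℂ A).compl₂ (lTensor A (plusA A) ∘ₗ Coalgebra.comul))

def epsPlusA : A ⊗[ℂ] A →ₗ[ℂ] A :=
  (TensorProduct.lid ℂ A).toLinearMap ∘ₗ map Coalgebra.counit (plusA A)

variable {A}

lemma phiA_tmul (x y : A) :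
    phiA A (x ⊗ₜ y) = map (mulLeft ℂ x) (plusA A) (Coalgebra.comul y) := by
  simp only [phiA, lift.tmul, compl₂_apply, coe_comp, Function.comp_apply, coe_rTensorHom]
  rw [← comp_apply (rTensor A _), rTensor_comp_lTensor]
  rfl

@[simp] lemma epsPlusA_tmul (x y : A) :
    epsPlusA A (x ⊗ₜ y) = Coalgebra.counit (R := ℂ) x • plusA A y := by
  simp [epsPlusA]

lemma lid_rTensor_counit_phiA (t : A ⊗[ℂ] A) :
    TensorProduct.lid ℂ A (rTensor A Coalgebra.counit (phiA A t)) = epsPlusA A t := by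
  induction t with
  | zero => simp
  | add s t hs ht => simp only [map_add, hs, ht]
  | tmul x y =>
    rw [phiA_tmul, ← comp_apply, rTensor_comp_map, Bialgebra.counit_comp_mulLeft,
      map_smul_left, LinearMap.smul_apply, map_smul, ← lTensor_comp_rTensor, comp_apply,
      Coalgebra.rTensor_counit_comul]
    simp

lemma lTensor_epsPlusA_coactTensor (u v : A ⊗[ℂ] A) :
    lTensor A (epsPlusA A) (coactTensor ℂ A A A (u ⊗ₜ v))
      = map (LinearMap.mul ℂ A (TensorProduct.rid ℂ A (lTensor A Coalgebra.counit u)))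
          (plusA A) v := by
  induction u with
  | zero => simp
  | add s t hs ht => simp only [add_tmul, map_add, hs, ht, map_add_left, LinearMap.add_apply]
  | tmul x a =>
    induction v with
    | zero => simp
    | add s t hs ht => simp only [tmul_add, map_add, hs, ht]
    | tmul y b => simp [smul_tmul']

lemma phiA_eq_lTensor_epsPlusA (t : A ⊗[ℂ] A) :
    phiA A t = lTensor A (epsPlusA A)
      (coactTensor ℂ A A A (map Coalgebra.comul Coalgebra.comul t)) := by
  induction t with
  | zero => simp
  | add s t hs ht => simp only [map_add, hs, ht]
  | tmul x y =>
    rw [map_tmul, lTensor_epsPlusA_coactTensor, Coalgebra.lTensor_counit_comul,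
      TensorProduct.rid_tmul, one_smul, phiA_tmul]
    rfl

lemma lTensor_phiA_coactTensor (u w : A ⊗[ℂ] A) :
    lTensor A (phiA A) (coactTensor ℂ A A A (u ⊗ₜ w))
      = TensorProduct.assoc ℂ A A A (map (LinearMap.mul ℂ (A ⊗[ℂ] A) u) (plusA A)
          ((TensorProduct.assoc ℂ A A A).symm (lTensor A Coalgebra.comul w))) := by
  induction u with
  | zero => simp
  | add s t hs ht => simp only [add_tmul, map_add, hs, ht, map_add_left, LinearMap.add_apply]
  | tmul x a =>
    induction w with
    | zero => simp
    | add s t hs ht => simp only [tmul_add, map_add, hs, ht]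
    | tmul y b =>
      simp only [coactTensor_tmul, lTensor_tmul, phiA_tmul]
      induction (Coalgebra.comul (R := ℂ) b) with
      | zero => simp
      | add s t hs ht => simp only [tmul_add, map_add, hs, ht]
      | tmul p q => simp

lemma lTensor_phiA_coactTensor_comul (t : A ⊗[ℂ] A) :
    lTensor A (phiA A) (coactTensor ℂ A A A (map Coalgebra.comul Coalgebra.comul t))
      = TensorProduct.assoc ℂ A A A (rTensor A Coalgebra.comul (phiA A t)) := by
  induction t with
  | zero => simp
  | add s t hs ht => simp only [map_add, hs, ht]
  | tmul x y =>
    have hmul : LinearMap.mul ℂ (A ⊗[ℂ] A) (Coalgebra.comul x) ∘ₗ Coalgebra.comul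
        = (Coalgebra.comul : A →ₗ[ℂ] A ⊗[ℂ] A) ∘ₗ mulLeft ℂ x := by
      ext z
      simp [Bialgebra.comul_mul]
    rw [map_tmul, lTensor_phiA_coactTensor, ← Coalgebra.coassoc_apply,
      LinearEquiv.symm_apply_apply, phiA_tmul, ← comp_apply (map _ _), map_comp_rTensor,
      hmul, ← rTensor_comp_map]
    rfl

end HopfLevel

section Submodules

open LinearMap

variable {A}

lemma range_lTensor_le_AOx {X : Type} [AddCommMonoid X] [Module ℂ X] (g : X →ₗ[ℂ] A)
    {N : Submodule ℂ A} (hg : range g ≤ N) : range (lTensor A g) ≤ AOx A N := by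
  rw [← subtype_comp_codRestrict N (f := g) fun x => hg (mem_range_self g x), lTensor_comp]
  exact range_comp_le_range _ _

lemma AOx_mono {N N' : Submodule ℂ A} (h : N ≤ N') : AOx A N ≤ AOx A N' :=
  range_lTensor_le_AOx N.subtype (by rwa [Submodule.range_subtype])

lemma lid_rTensor_mem_of_mem_AOx (f : A →ₗ[ℂ] ℂ) {N : Submodule ℂ A} {t : A ⊗[ℂ] A}
    (ht : t ∈ AOx A N) : TensorProduct.lid ℂ A (rTensor A f t) ∈ N := by
  obtain ⟨s, rfl⟩ := ht
  have hnat : TensorProduct.lid ℂ A (rTensor A f (map id N.subtype s))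
      = N.subtype (TensorProduct.lid ℂ N (rTensor N f s)) := by
    induction s with
    | zero => simp
    | add s t hs ht => simp only [map_add, hs, ht]
    | tmul x n => simp
  exact hnat ▸ (TensorProduct.lid ℂ N (rTensor N f s)).2

lemma lTensor_mkQ_assoc_rTensor_eq_zero (f : A →ₗ[ℂ] A ⊗[ℂ] A) {N : Submodule ℂ A}
    {x : A ⊗[ℂ] A} (hx : x ∈ AOx A N) :
    lTensor A (AOx A N).mkQ (TensorProduct.assoc ℂ A A A (rTensor A f x)) = 0 := by
  obtain ⟨s, rfl⟩ := hx
  change lTensor A _ (TensorProduct.assoc ℂ A A A (rTensor A f (lTensor A N.subtype s))) = 0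
  have hzero : (AOx A N).mkQ ∘ₗ lTensor A N.subtype = 0 := by
    rw [← range_le_ker_iff, Submodule.ker_mkQ]
    rfl
  have hnat : TensorProduct.assoc ℂ A A A (rTensor A f (lTensor A N.subtype s))
      = lTensor A (lTensor A N.subtype) (TensorProduct.assoc ℂ A A N (rTensor N f s)) := by
    rw [lTensor, lTensor, map_map_assoc, TensorProduct.map_id, ← comp_apply (map _ _),
      map_comp_rTensor, ← comp_apply (rTensor A f), rTensor_comp_map]
    rfl
  rw [hnat, ← comp_apply (lTensor A _), ← lTensor_comp, hzero, lTensor_zero, LinearMap.zero_apply]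

end Submodules

section SubalgebraLevel

open LinearMap

variable {A}

def valTensor : B ⊗[ℂ] B →ₗ[ℂ] A ⊗[ℂ] A := map B.val.toLinearMap B.val.toLinearMap

def epsPlusB : B ⊗[ℂ] B →ₗ[ℂ] B :=
  (TensorProduct.lid ℂ B).toLinearMap ∘ₗ map (epsB A B).toLinearMap (plusB A B)

variable {B}

def diagCoaction : B ⊗[ℂ] B →ₗ[ℂ] A ⊗[ℂ] (B ⊗[ℂ] B) :=
  coactTensor ℂ A B B ∘ₗ map comulB comulB

def IsCorestrictedComul : Prop :=
  ∀ b : B, TensorProduct.map LinearMap.id B.val.toLinearMap (comulB b) = Coalgebra.comul (b : A)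

variable {comulB}

lemma PhiE_eq_phiA (hcB : IsCorestrictedComul comulB) (a b : B) :
    PhiE A B comulB a b = phiA A (valTensor B (a ⊗ₜ b)) := by
  simp only [PhiE, valTensor, map_tmul, phiA_tmul, AlgHom.toLinearMap_apply,
    Subalgebra.coe_val, ← hcB b, ← map_comp_lTensor]
  rfl

lemma val_epsPlusB (t : B ⊗[ℂ] B) :
    (epsPlusB B t : A) = epsPlusA A (valTensor B t) := by
  induction t with
  | zero => simp
  | add s t hs ht => simp only [map_add, Subalgebra.coe_add, hs, ht]
  | tmul a b => simp [epsPlusB, valTensor, plusB, plusA, epsB]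

lemma lTensor_valTensor_diagCoaction (hcB : IsCorestrictedComul comulB) (t : B ⊗[ℂ] B) :
    lTensor A (valTensor B) (diagCoaction comulB t)
      = coactTensor ℂ A A A (map Coalgebra.comul Coalgebra.comul (valTensor B t)) := by
  have hcomp : lTensor A B.val.toLinearMap ∘ₗ comulB = Coalgebra.comul ∘ₗ B.val.toLinearMap :=
    LinearMap.ext hcB
  rw [diagCoaction, valTensor, ← comp_apply (lTensor A _), ← comp_assoc,
    lTensor_map_comp_coactTensor, comp_assoc, ← map_comp, hcomp, map_comp]
  rfl

lemma sweedlerMap_eq_lTensor_smulD {M : Type} [AddCommGroup M] [Module ℂ M]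
    (δ : BimodDeriv B M) :
    sweedlerMap A B comulB δ = lTensor A δ.smulD ∘ₗ diagCoaction comulB := by
  rw [sweedlerMap, diagCoaction, coactTensor]
  simp only [← comp_assoc, lTensor_comp_map]
  rfl

lemma phiA_mem_AOx_of_diagCoaction_mem (hcB : IsCorestrictedComul comulB)
    {K : Submodule ℂ (B ⊗[ℂ] B)} {t : B ⊗[ℂ] B}
    (ht : diagCoaction comulB t ∈ range (lTensor A K.subtype)) :
    phiA A (valTensor B t) ∈ AOx A ((K.map (epsPlusB B)).map B.val.toLinearMap) := by
  obtain ⟨s, hs⟩ := ht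
  have hval : epsPlusA A ∘ₗ valTensor B = B.val.toLinearMap ∘ₗ epsPlusB B :=
    LinearMap.ext fun t => (val_epsPlusB t).symm
  have hphi : phiA A (valTensor B t)
      = lTensor A (B.val.toLinearMap ∘ₗ epsPlusB B ∘ₗ K.subtype) s := by
    rw [phiA_eq_lTensor_epsPlusA, ← lTensor_valTensor_diagCoaction hcB, ← hs]
    change (lTensor A (epsPlusA A) ∘ₗ lTensor A (valTensor B) ∘ₗ lTensor A K.subtype) s = _
    rw [← lTensor_comp, ← lTensor_comp, ← comp_assoc, hval, comp_assoc]
  have hrange : range (B.val.toLinearMap ∘ₗ epsPlusB B ∘ₗ K.subtype)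
      = (K.map (epsPlusB B)).map B.val.toLinearMap := by
    rw [range_comp, range_comp, Submodule.range_subtype]
  rw [hphi]
  exact range_lTensor_le_AOx _ hrange.le (mem_range_self _ s)

lemma epsPlusB_mem_of_phiA_mem {N : Submodule ℂ B} {t : B ⊗[ℂ] B}
    (ht : phiA A (valTensor B t) ∈ AOx A (N.map B.val.toLinearMap)) :
    epsPlusB B t ∈ N := by
  have h := lid_rTensor_mem_of_mem_AOx Coalgebra.counit ht
  rw [lid_rTensor_counit_phiA, ← val_epsPlusB] at h
  obtain ⟨y, hy, hyt⟩ := h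
  rwa [← Subtype.val_injective hyt]

lemma lTensor_mkQ_phiA_diagCoaction_eq_zero (hcB : IsCorestrictedComul comulB)
    {N : Submodule ℂ A} {t : B ⊗[ℂ] B} (ht : phiA A (valTensor B t) ∈ AOx A N) :
    lTensor A ((AOx A N).mkQ ∘ₗ phiA A ∘ₗ valTensor B) (diagCoaction comulB t) = 0 := by
  rw [lTensor_comp, lTensor_comp, comp_apply, comp_apply, lTensor_valTensor_diagCoaction hcB,
    lTensor_phiA_coactTensor_comul]
  exact lTensor_mkQ_assoc_rTensor_eq_zero _ ht

end SubalgebraLevel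

section ListLevel

open LinearMap

variable {A B comulB}

lemma sum_PhiE_eq (hcB : IsCorestrictedComul comulB) (L : List (B × B)) :
    (L.map fun p => PhiE A B comulB p.1 p.2).sum = phiA A (valTensor B (sumTmul L)) :=
  sum_map_eq_sumTmul (F := phiA A ∘ₗ valTensor B)
    (fun a b => (PhiE_eq_phiA hcB a b).symm) L

lemma sum_smulD_eq {M : Type} [AddCommGroup M] [Module ℂ M] (δ : BimodDeriv B M)
    (L : List (B × B)) : (L.map fun p => δ.l p.1 (δ.d p.2)).sum = δ.smulD (sumTmul L) :=
  sum_map_eq_sumTmul (F := δ.smulD) (G := fun a b => δ.l a (δ.d b)) (fun _ _ => rfl) L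

lemma sum_sweedlerMap_eq {M : Type} [AddCommGroup M] [Module ℂ M] (δ : BimodDeriv B M)
    (L : List (B × B)) :
    (L.map fun p => sweedlerMap A B comulB δ (p.1 ⊗ₜ p.2)).sum
      = lTensor A δ.smulD (diagCoaction comulB (sumTmul L)) := by
  rw [← comp_apply, ← sweedlerMap_eq_lTensor_smulD]
  exact sum_map_eq_sumTmul (F := sweedlerMap A B comulB δ)
    (G := fun a b => sweedlerMap A B comulB δ (a ⊗ₜ b)) (fun _ _ => rfl) L

lemma sum_epsB_smul_plusB_eq (L : List (B × B)) :
    (L.map fun p => epsB A B p.1 • plusB A B p.2).sum = epsPlusB B (sumTmul L) :=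
  sum_map_eq_sumTmul (F := epsPlusB B) (G := fun a b => epsB A B a • plusB A B b)
    (fun _ _ => by simp [epsPlusB]) L

lemma RdeltaSet_eq_map_ker {M : Type} [AddCommGroup M] [Module ℂ M] (δ : BimodDeriv B M) :
    RdeltaSet A B δ = (ker δ.smulD).map (epsPlusB B) := by
  ext x
  constructor
  · rintro ⟨L, hL, rfl⟩
    exact ⟨sumTmul L, by rwa [SetLike.mem_coe, mem_ker, ← sum_smulD_eq],
      (sum_epsB_smul_plusB_eq L).symm⟩
  · rintro ⟨t, ht, rfl⟩
    obtain ⟨L, rfl⟩ := exists_sumTmul_eq t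
    exact ⟨L, by rwa [sum_smulD_eq], (sum_epsB_smul_plusB_eq L).symm⟩

lemma span_RdeltaSet {M : Type} [AddCommGroup M] [Module ℂ M] (δ : BimodDeriv B M) :
    (Submodule.span ℂ (RdeltaSet A B δ) : Set B) = RdeltaSet A B δ := by
  rw [RdeltaSet_eq_map_ker, Submodule.span_eq]

lemma RdeltaRSet_subset (hcB : IsCorestrictedComul comulB) (N : Submodule ℂ B) :
    RdeltaRSet A B comulB N ⊆ N := by
  rintro _ ⟨L, hL, rfl⟩
  rw [sum_PhiE_eq hcB] at hL
  rw [sum_epsB_smul_plusB_eq]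
  exact epsPlusB_mem_of_phiA_mem hL

lemma sum_PhiE_mem_span_RdeltaSet (hcB : IsCorestrictedComul comulB)
    {M : Type} [AddCommGroup M] [Module ℂ M] {δ : BimodDeriv B M}
    (hδ : IsEquivariant A B comulB δ) {L : List (B × B)}
    (hL : (L.map fun p => δ.l p.1 (δ.d p.2)).sum = 0) :
    (L.map fun p => PhiE A B comulB p.1 p.2).sum
      ∈ AOx A ((Submodule.span ℂ (RdeltaSet A B δ)).map B.val.toLinearMap) := by
  have hW : lTensor A δ.smulD (diagCoaction comulB (sumTmul L)) = 0 := by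
    rw [← sum_sweedlerMap_eq]
    exact hδ L hL
  rw [sum_PhiE_eq hcB]
  refine AOx_mono (Submodule.map_mono ?_) (phiA_mem_AOx_of_diagCoaction_mem hcB
    (Module.Flat.mem_range_lTensor_ker_subtype hW))
  exact fun _ hx => Submodule.subset_span (by rwa [RdeltaSet_eq_map_ker])

lemma sum_PhiE_mem_span_RdeltaRSet (hcB : IsCorestrictedComul comulB)
    {R : Submodule ℂ B} {L : List (B × B)}
    (hL : (L.map fun p => PhiE A B comulB p.1 p.2).sum ∈ AOx A (R.map B.val.toLinearMap)) :
    (L.map fun p => PhiE A B comulB p.1 p.2).sum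
      ∈ AOx A ((Submodule.span ℂ (RdeltaRSet A B comulB R)).map B.val.toLinearMap) := by
  rw [sum_PhiE_eq hcB] at hL ⊢
  refine AOx_mono (Submodule.map_mono ?_) (phiA_mem_AOx_of_diagCoaction_mem hcB
    (Module.Flat.mem_range_lTensor_ker_subtype
      (lTensor_mkQ_phiA_diagCoaction_eq_zero hcB hL)))
  rintro _ ⟨t, ht, rfl⟩
  obtain ⟨L', rfl⟩ := exists_sumTmul_eq t
  refine Submodule.subset_span ⟨L', ?_, (sum_epsB_smul_plusB_eq L').symm⟩
  rwa [sum_PhiE_eq hcB, ← Submodule.Quotient.mk_eq_zero]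

end ListLevel

/-- Theorem 1 (iii): `R_{δ_R} ⊆ R` for every right ideal
`R ⊆ B⁺`, and `δ_{R_δ} ≤ δ` for every equivariant derivation `δ`;
both assignments are order-reversing, and consequently `R ↦ δ_R`,
`δ ↦ R_δ` are mutually inverse bijections between `{R_δ}` and `{δ_R}`:
`R_{δ_{R_δ}} = R_δ` and `δ_{R_{δ_R}} = δ_R`. -/
theorem Galois_correspondence_right_ideals_equivariant_derivations
    (hcomulB : ∀ b : ↥B,
      (TensorProduct.map LinearMap.id B.val.toLinearMap) (comulB b)
        = Coalgebra.comul (b : A)) :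
    -- (a) order reversal for ideals: R ⊆ R' implies δ_{R'} ≤ δ_R
    (∀ R R' : Submodule ℂ ↥B, R ≤ Bplus A B → R' ≤ Bplus A B →
      (∀ x ∈ R, ∀ b ∈ Bplus A B, x * b ∈ R) →
      (∀ x ∈ R', ∀ b ∈ Bplus A B, x * b ∈ R') → R ≤ R' →
      ∀ L : List (↥B × ↥B),
        (L.map fun p => PhiE A B comulB p.1 p.2).sum
            ∈ AOx A (R.map B.val.toLinearMap) →
        (L.map fun p => PhiE A B comulB p.1 p.2).sum
            ∈ AOx A (R'.map B.val.toLinearMap)) ∧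
    -- (b) order reversal for derivations: δ' ≤ δ implies R_δ ⊆ R_{δ'}
    (∀ (M M' : Type) (_ : AddCommGroup M) (_ : Module ℂ M)
        (_ : AddCommGroup M') (_ : Module ℂ M')
        (δ : BimodDeriv ↥B M) (δ' : BimodDeriv ↥B M'),
      (∀ L : List (↥B × ↥B),
        (L.map fun p => δ.l p.1 (δ.d p.2)).sum = 0 →
        (L.map fun p => δ'.l p.1 (δ'.d p.2)).sum = 0) →
      RdeltaSet A B δ ⊆ RdeltaSet A B δ') ∧
    -- (c) `R_{δ_R} ⊆ R`
    (∀ R : Submodule ℂ ↥B, R ≤ Bplus A B →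
      (∀ x ∈ R, ∀ b ∈ Bplus A B, x * b ∈ R) →
      ∀ x ∈ RdeltaRSet A B comulB R, x ∈ R) ∧
    -- (d) `δ_{R_δ} ≤ δ` for equivariant δ
    (∀ (M : Type) (_ : AddCommGroup M) (_ : Module ℂ M)
        (δ : BimodDeriv ↥B M), IsEquivariant A B comulB δ →
      ∀ L : List (↥B × ↥B),
        (L.map fun p => δ.l p.1 (δ.d p.2)).sum = 0 →
        (L.map fun p => PhiE A B comulB p.1 p.2).sum
          ∈ AOx A ((Submodule.span ℂ (RdeltaSet A B δ)).map B.val.toLinearMap)) ∧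
    -- `R_{δ_{R_δ}} = R_δ` for equivariant δ
    (∀ (M : Type) (_ : AddCommGroup M) (_ : Module ℂ M)
        (δ : BimodDeriv ↥B M), IsEquivariant A B comulB δ →
      RdeltaRSet A B comulB (Submodule.span ℂ (RdeltaSet A B δ))
        = RdeltaSet A B δ) ∧
    -- `δ_{R_{δ_R}} = δ_R` for every right ideal R of B⁺
    (∀ R : Submodule ℂ ↥B, R ≤ Bplus A B →
      (∀ x ∈ R, ∀ b ∈ Bplus A B, x * b ∈ R) →
      ∀ L : List (↥B × ↥B),
        ((L.map fun p => PhiE A B comulB p.1 p.2).sum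
            ∈ AOx A ((Submodule.span ℂ (RdeltaRSet A B comulB R)).map
                B.val.toLinearMap) ↔
         (L.map fun p => PhiE A B comulB p.1 p.2).sum
            ∈ AOx A (R.map B.val.toLinearMap))) := by
  refine ⟨?_, ?_, fun R _ _ => RdeltaRSet_subset hcomulB R, ?_, ?_, ?_⟩
  · intro R R' _ _ _ _ hRR' _ h
    exact AOx_mono (Submodule.map_mono hRR') h
  · intro M M' _ _ _ _ δ δ' hδδ' x ⟨L, hL, hx⟩
    exact ⟨L, hδδ' L hL, hx⟩
  · intro M _ _ δ hδ L hL
    exact sum_PhiE_mem_span_RdeltaSet hcomulB hδ hL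
  · intro M _ _ δ hδ
    refine Set.Subset.antisymm ?_ fun x ⟨L, hL, hx⟩ =>
      ⟨L, sum_PhiE_mem_span_RdeltaSet hcomulB hδ hL, hx⟩
    simpa only [span_RdeltaSet] using
      RdeltaRSet_subset hcomulB (Submodule.span ℂ (RdeltaSet A B δ))
  · intro R _ _ L
    refine ⟨fun h => AOx_mono (Submodule.map_mono ?_) h, sum_PhiE_mem_span_RdeltaRSet hcomulB⟩
    exact Submodule.span_le.mpr (RdeltaRSet_subset hcomulB R)

end
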